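/- arXiv:2505.05048 — 10 statements merged into one kernel-verified Lean document; each statement's English description precedes it below -/
import Mathlib

section
/- Let $d\ge 1$ and $\lambda_0,\lambda_1,\ldots,\lambda_d \in \mathbb{R}\setminus\{0\}$. The $d\times d$ matrix $G$ with entries $G_{ij} = 1/\lambda_0 + \delta_{ij}/\lambda_i$ is positive definite if and only if either (A) all of $\lambda_0,\lambda_1,\ldots,\lambda_d$ are positive, or (B) exactly one of $\lambda_0,\lambda_1,\ldots,\lambda_d$ is negative, all others are positive, and $\lambda_0+\lambda_1+\cdots+\lambda_d < 0$. -/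
/-!
With `w = (λ₀, λ₁, …, λ_d)` and `y = (-∑ xᵢ, x₁, …, x_d)` one has `xᵀ G x = ∑ᵢ yᵢ² / wᵢ`, so `G` is
positive definite iff the diagonal form `∑ yᵢ² / wᵢ` is positive on the nonzero vectors of the
hyperplane `∑ yᵢ = 0` in `ℝ^{d+1}`, a condition symmetric in all the `λᵢ`. Testing it on
`eᵢ - eⱼ` gives `1/wᵢ + 1/wⱼ > 0`, so at most one `wᵢ` is negative; if `w_k < 0`, testing it on
`w - (∑ w) e_k` forces `∑ w < 0`. Conversely, if `w_k < 0 < w_j` for `j ≠ k` and `∑ w < 0`, then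
Cauchy–Schwarz gives `y_k² = (∑_{j≠k} yⱼ)² ≤ (∑_{j≠k} wⱼ) ∑_{j≠k} yⱼ²/wⱼ < -w_k ∑_{j≠k} yⱼ²/wⱼ`.
-/

open Finset Matrix

section SumZeroHyperplane

variable {ι : Type*} [Fintype ι]

def DiagPosDefOnSumZero (w : ι → ℝ) : Prop :=
  ∀ y : ι → ℝ, y ≠ 0 → ∑ i, y i = 0 → 0 < ∑ i, y i ^ 2 / w i

namespace DiagPosDefOnSumZero

variable {w : ι → ℝ}

theorem one_div_add_one_div_pos (hw : DiagPosDefOnSumZero w) {i j : ι} (hij : i ≠ j) :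
    0 < 1 / w i + 1 / w j := by
  classical
  let y : ι → ℝ := Pi.single i 1 - Pi.single j 1
  have hy : y ≠ 0 := fun h => by simpa [y, hij] using congrFun h i
  have hsum : ∑ k, y k = 0 := by simp [y, sum_sub_distrib]
  convert hw y hy hsum using 1
  rw [Fintype.sum_eq_add i j hij fun k hk => by simp [y, hk.1, hk.2]]
  simp [y, hij, hij.symm]

theorem sum_neg (hw : DiagPosDefOnSumZero w) (hw0 : ∀ i, w i ≠ 0) {k : ι} (hk : w k < 0) :
    ∑ i, w i < 0 := by
  classical
  by_contra! hS
  set S := ∑ i, w i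
  let y : ι → ℝ := w - Pi.single k S
  have hy : y ≠ 0 := fun h => by
    have := congrFun h k
    simp only [y, Pi.sub_apply, Pi.single_eq_same, Pi.zero_apply] at this
    linarith
  have hsum : ∑ i, y i = 0 := by simp [y, sum_sub_distrib, S]
  have hQ : ∑ i, y i ^ 2 / w i = (w k - S) ^ 2 / w k + (S - w k) := by
    rw [← add_sum_erase _ _ (mem_univ k), ← sum_erase_eq_sub (mem_univ k)]
    congr 1
    · simp [y]
    · refine sum_congr rfl fun j hj => ?_
      simp [y, ne_of_mem_erase hj, sq, hw0 j]
  have hpos := hw y hy hsum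
  rw [hQ] at hpos
  have : (w k - S) ^ 2 / w k + (S - w k) ≤ 0 := by
    rw [div_add' _ _ _ hk.ne]
    exact div_nonpos_of_nonneg_of_nonpos (by nlinarith) hk.le
  linarith

theorem of_pos (hw : ∀ i, 0 < w i) : DiagPosDefOnSumZero w := by
  intro y hy _
  obtain ⟨i, hi⟩ := Function.ne_iff.1 hy
  exact sum_pos' (fun j _ => div_nonneg (sq_nonneg _) (hw j).le)
    ⟨i, mem_univ _, div_pos (pow_two_pos_of_ne_zero hi) (hw i)⟩

theorem of_neg {k : ι} (hk : w k < 0) (hpos : ∀ j ≠ k, 0 < w j) (hS : ∑ i, w i < 0) :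
    DiagPosDefOnSumZero w := by
  classical
  intro y hy hsum
  set s := univ.erase k
  have hws : ∀ j ∈ s, 0 < w j := fun j hj => hpos j (ne_of_mem_erase hj)
  have hyk : y k = -∑ j ∈ s, y j := by
    rw [eq_neg_iff_add_eq_zero, add_sum_erase _ _ (mem_univ k), hsum]
  set T := ∑ j ∈ s, y j ^ 2 / w j
  have hTnn : ∀ j ∈ s, 0 ≤ y j ^ 2 / w j := fun j hj => div_nonneg (sq_nonneg _) (hws j hj).le
  have hT : 0 < T := by
    refine (sum_nonneg hTnn).lt_of_ne fun hT0 => hy ?_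
    have hys : ∀ j ∈ s, y j = 0 := fun j hj => by
      simpa [(hws j hj).ne'] using (sum_eq_zero_iff_of_nonneg hTnn).1 hT0.symm j hj
    funext j
    rcases eq_or_ne j k with rfl | hj
    · rw [hyk, sum_eq_zero hys, neg_zero, Pi.zero_apply]
    · exact hys j (mem_erase.2 ⟨hj, mem_univ _⟩)
  have hCS : y k ^ 2 ≤ (∑ j ∈ s, w j) * T := by
    rw [hyk, neg_sq]
    exact sum_sq_le_sum_mul_sum_of_sq_le_mul s (fun j hj => (hws j hj).le) hTnn
      fun j hj => (mul_div_cancel₀ _ (hws j hj).ne').ge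
  have hμ : ∑ j ∈ s, w j < -w k := by
    rw [sum_erase_eq_sub (mem_univ k)]
    linarith
  have hyk_lt : y k ^ 2 / -w k < T :=
    (div_lt_iff₀ (neg_pos.2 hk)).2 (by nlinarith)
  rw [← add_sum_erase _ _ (mem_univ k), ← neg_neg (w k), div_neg]
  linarith

end DiagPosDefOnSumZero

theorem diagPosDefOnSumZero_iff {w : ι → ℝ} (hw0 : ∀ i, w i ≠ 0) :
    DiagPosDefOnSumZero w ↔
      (∀ i, 0 < w i) ∨ ((∃ k, w k < 0 ∧ ∀ j ≠ k, 0 < w j) ∧ ∑ i, w i < 0) := by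
  refine ⟨fun hw => ?_, ?_⟩
  · by_cases hall : ∀ i, 0 < w i
    · exact .inl hall
    obtain ⟨k, hk⟩ := not_forall.1 hall
    replace hk : w k < 0 := (not_lt.1 hk).lt_of_ne (hw0 k)
    refine .inr ⟨⟨k, hk, fun j hj => ?_⟩, hw.sum_neg hw0 hk⟩
    by_contra! hj'
    have := hw.one_div_add_one_div_pos hj
    have := one_div_neg.2 (hj'.lt_of_ne (hw0 j))
    have := one_div_neg.2 hk
    linarith
  · rintro (hpos | ⟨⟨k, hk, hpos⟩, hS⟩)
    exacts [.of_pos hpos, .of_neg hk hpos hS]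

end SumZeroHyperplane

section OrthocentricMatrix

variable {d : ℕ}

noncomputable def orthocentricMatrix (lam0 : ℝ) (lam : Fin d → ℝ) : Matrix (Fin d) (Fin d) ℝ :=
  fun i j => 1 / lam0 + if i = j then 1 / lam i else 0

theorem dotProduct_orthocentricMatrix_mulVec (lam0 : ℝ) (lam x : Fin d → ℝ) :
    x ⬝ᵥ (orthocentricMatrix lam0 lam *ᵥ x) =
      ∑ i, (Fin.cons (-∑ j, x j) x : Fin (d + 1) → ℝ) i ^ 2 /
        (Fin.cons lam0 lam : Fin (d + 1) → ℝ) i := by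
  simp only [orthocentricMatrix, dotProduct, mulVec, add_mul, mul_add, sum_add_distrib, ite_mul,
    zero_mul, sum_ite_eq, mem_univ, if_true, Fin.sum_univ_succ, Fin.cons_zero, Fin.cons_succ]
  rw [← sum_mul, ← mul_sum]
  ring_nf

theorem isHermitian_orthocentricMatrix (lam0 : ℝ) (lam : Fin d → ℝ) :
    (orthocentricMatrix lam0 lam).IsHermitian :=
  IsHermitian.ext fun i j => by
    rcases eq_or_ne i j with rfl | hij
    · rfl
    · simp [orthocentricMatrix, hij, hij.symm]

theorem posDef_orthocentricMatrix_iff (lam0 : ℝ) (lam : Fin d → ℝ) :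
    (orthocentricMatrix lam0 lam).PosDef ↔
      DiagPosDefOnSumZero (Fin.cons lam0 lam : Fin (d + 1) → ℝ) := by
  simp only [posDef_iff_dotProduct_mulVec, isHermitian_orthocentricMatrix, true_and,
    star_trivial, dotProduct_orthocentricMatrix_mulVec]
  constructor
  · intro hpd y hy hsum
    have hy0 : -∑ j, Fin.tail y j = y 0 := by
      rw [Fin.sum_univ_succ] at hsum
      simp only [Fin.tail]
      linarith
    have hcons : Fin.cons (-∑ j, Fin.tail y j) (Fin.tail y) = y := hy0 ▸ Fin.cons_self_tail y
    refine hcons ▸ hpd fun hx => hy ?_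
    rw [← hcons, hx]
    simp only [Pi.zero_apply, sum_const_zero, neg_zero]
    exact cons_zero_zero
  · intro hw x hx
    exact hw _ (fun h => hx ((Fin.tail_cons _ _).symm.trans (congrArg Fin.tail h)))
      (by simp [Fin.sum_cons])

end OrthocentricMatrix

theorem orthocentric_matrix_posDef_iff_general (d : ℕ)
    (lam0 : ℝ) (lam : Fin d → ℝ) (h0 : lam0 ≠ 0) (h : ∀ i, lam i ≠ 0) :
    (Matrix.PosDef (fun i j : Fin d =>
        1 / lam0 + if i = j then 1 / lam i else 0)) ↔
      ((0 < lam0 ∧ ∀ i, 0 < lam i) ∨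
        (((lam0 < 0 ∧ ∀ i, 0 < lam i) ∨
            (∃ i, lam i < 0 ∧ 0 < lam0 ∧ ∀ j, j ≠ i → 0 < lam j)) ∧
          lam0 + ∑ i, lam i < 0)) := by
  have hw0 : ∀ i, (Fin.cons lam0 lam : Fin (d + 1) → ℝ) i ≠ 0 := Fin.cases h0 h
  refine (posDef_orthocentricMatrix_iff lam0 lam).trans <| (diagPosDefOnSumZero_iff hw0).trans ?_
  simp [Fin.forall_fin_succ, Fin.exists_fin_succ, Fin.sum_cons, Fin.succ_ne_zero, eq_comm]

/-- The matrix `G_{ij} = 1/λ₀ + δ_{ij}/λ_i` is positive definite iff either all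
`λ₀,λ₁,…,λ_d` are positive, or exactly one of them is negative, the others are positive,
and `λ₀ + λ₁ + ⋯ + λ_d < 0`. -/
theorem orthocentric_matrix_posDef_iff (d : ℕ) (hd : 1 ≤ d)
    (lam0 : ℝ) (lam : Fin d → ℝ) (h0 : lam0 ≠ 0) (h : ∀ i, lam i ≠ 0) :
    (Matrix.PosDef (fun i j : Fin d =>
        1 / lam0 + if i = j then 1 / lam i else 0)) ↔
      ((0 < lam0 ∧ ∀ i, 0 < lam i) ∨
        (((lam0 < 0 ∧ ∀ i, 0 < lam i) ∨
            (∃ i, lam i < 0 ∧ 0 < lam0 ∧ ∀ j, j ≠ i → 0 < lam j)) ∧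
          lam0 + ∑ i, lam i < 0)) :=
  orthocentric_matrix_posDef_iff_general d lam0 lam h0 h
end

section
/- Let $v_0,\ldots,v_d\in\mathbb{R}^N$ be affinely independent ($d\ge 2$), and suppose $w$ in the affine hull satisfies $\langle v_i-w, v_j-w\rangle = c$ for all $i\ne j$, for some constant $c$. If $w$ lies in the relative interior of the simplex $[v_0,\ldots,v_d]$, then $c < 0$. -/
/-!
Write `w = ∑ aᵢ vᵢ`; lying in the relative interior means every barycentric weight `aᵢ` is in
`(0, 1)`. Since `∑ aᵢ (vᵢ - w) = 0`, expanding its squared norm gives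
`0 = ∑ aᵢ² ‖vᵢ - w‖² + c (1 - ∑ aᵢ²)`. The first sum is positive because `w` is not a vertex,
and `∑ aᵢ² < ∑ aᵢ = 1`, so `c < 0`.
-/

open scoped RealInnerProductSpace
open Finset Filter Topology

theorem norm_sum_smul_sq_of_inner_eq {ι E : Type*} [Fintype ι] [NormedAddCommGroup E]
    [InnerProductSpace ℝ E] (a : ι → ℝ) (x : ι → E) {c : ℝ}
    (hc : ∀ i j, i ≠ j → ⟪x i, x j⟫ = c) :
    ‖∑ i, a i • x i‖ ^ 2 = ∑ i, a i ^ 2 * ‖x i‖ ^ 2 + c * ((∑ i, a i) ^ 2 - ∑ i, a i ^ 2) := by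
  classical
  have hinner : ∀ i j, ⟪x i, x j⟫ = c + if i = j then ‖x i‖ ^ 2 - c else 0 := by
    intro i j
    split_ifs with hij
    · rw [hij, real_inner_self_eq_norm_sq]; ring
    · rw [hc i j hij, add_zero]
  calc ‖∑ i, a i • x i‖ ^ 2 = ∑ i, ∑ j, a i * a j * ⟪x i, x j⟫ := by
        simp_rw [← real_inner_self_eq_norm_sq, sum_inner, inner_sum, real_inner_smul_left,
          real_inner_smul_right, mul_assoc]
    _ = _ := by
        simp_rw [hinner, mul_add, mul_ite, mul_zero, sum_add_distrib, sum_ite_eq, mem_univ,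
          if_true, ← sum_mul, ← mul_sum]
        simp only [← sum_mul, mul_sub, sum_sub_distrib, ← sq]
        ring

theorem sum_sq_lt_sum_of_mem_Ioo {ι : Type*} [Fintype ι] [Nonempty ι] {a : ι → ℝ}
    (ha : ∀ i, a i ∈ Set.Ioo 0 1) : ∑ i, a i ^ 2 < ∑ i, a i :=
  sum_lt_sum_of_nonempty univ_nonempty fun i _ =>
    pow_lt_self_of_lt_one₀ (ha i).1 (ha i).2 one_lt_two

theorem eventually_lineMap_mem_of_mem_intrinsicInterior {V : Type*} [AddCommGroup V] [Module ℝ V]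
    [TopologicalSpace V] [IsTopologicalAddGroup V] [ContinuousSMul ℝ V] {s : Set V} {x y : V}
    (hx : x ∈ intrinsicInterior ℝ s) (hy : y ∈ affineSpan ℝ s) :
    ∀ᶠ t in 𝓝 (0 : ℝ), AffineMap.lineMap x y t ∈ s := by
  obtain ⟨z, hz, rfl⟩ := mem_intrinsicInterior.1 hx
  let f : ℝ → affineSpan ℝ s :=
    fun t => ⟨AffineMap.lineMap (z : V) y t, AffineMap.lineMap_mem t z.2 hy⟩
  have hf : Continuous f := AffineMap.lineMap_continuous.subtype_mk _
  have hf0 : f 0 = z := Subtype.ext (AffineMap.lineMap_apply_zero _ _)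
  exact hf.continuousAt.preimage_mem_nhds (hf0 ▸ mem_interior_iff_mem_nhds.1 hz)

namespace Affine.Simplex

variable {V : Type*} [AddCommGroup V] [Module ℝ V] [TopologicalSpace V] [IsTopologicalAddGroup V]
  [ContinuousSMul ℝ V] {n : ℕ}

theorem pos_of_affineCombination_mem_intrinsicInterior (s : Simplex ℝ V n)
    {a : Fin (n + 1) → ℝ} (ha : ∑ i, a i = 1)
    (hs : univ.affineCombination ℝ s.points a ∈
      intrinsicInterior ℝ (convexHull ℝ (Set.range s.points)))
    (k : Fin (n + 1)) : 0 < a k := by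
  -- Moving slightly away from `s.points k` stays in the hull, where the `k`-th weight is
  -- `(1 - t) * a k + t` for some `t < 0`; its nonnegativity forces `a k > 0`.
  have hk : s.points k ∈ affineSpan ℝ (convexHull ℝ (Set.range s.points)) :=
    subset_affineSpan ℝ _ (subset_convexHull ℝ _ (Set.mem_range_self k))
  obtain ⟨t, hmem, ht⟩ := (((eventually_lineMap_mem_of_mem_intrinsicInterior hs hk).filter_mono
    nhdsWithin_le_nhds).and (self_mem_nhdsWithin (s := Set.Iio (0 : ℝ)))).exists
  rw [← univ.affineCombination_piSingle ℝ s.points (mem_univ k), lineMap_affineCombination,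
    convexHull_eq_closedInterior, affineCombination_mem_closedInterior_iff] at hmem
  · have := (hmem k).1
    simp only [AffineMap.lineMap_apply_module, Pi.add_apply, Pi.smul_apply, Pi.single_eq_same,
      smul_eq_mul] at this
    nlinarith
  · simp [AffineMap.lineMap_apply_module, sum_add_distrib, ← mul_sum, ha]

theorem intrinsicInterior_convexHull_subset_interior [NeZero n] (s : Simplex ℝ V n) :
    intrinsicInterior ℝ (convexHull ℝ (Set.range s.points)) ⊆ s.interior := by
  intro p hp
  obtain ⟨a, ha, -, rfl⟩ := convexHull_eq_closedInterior s ▸ intrinsicInterior_subset hp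
  have hpos := s.pos_of_affineCombination_mem_intrinsicInterior ha hp
  refine (affineCombination_mem_interior_iff ha).2 fun k => ⟨hpos k, ?_⟩
  obtain ⟨j, hj⟩ := exists_ne k
  exact ha ▸ single_lt_sum hj (mem_univ k) (mem_univ j) (hpos j) fun i _ _ => (hpos i).le

end Affine.Simplex

/-- If `w` lies in the relative interior of the simplex `[v₀,…,v_d]` and
`⟪v i - w, v j - w⟫ = c` for all `i ≠ j`, then `c < 0`. -/
theorem orthocenter_relint_c_neg (N d : ℕ) (hd : 2 ≤ d)
    (v : Fin (d + 1) → EuclideanSpace ℝ (Fin N))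
    (hv : AffineIndependent ℝ v)
    (w : EuclideanSpace ℝ (Fin N)) (c : ℝ)
    (hc : ∀ i j : Fin (d + 1), i ≠ j → ⟪v i - w, v j - w⟫ = c)
    (hw : w ∈ intrinsicInterior ℝ (convexHull ℝ (Set.range v))) :
    c < 0 := by
  have : NeZero d := ⟨by omega⟩
  let s : Affine.Simplex ℝ (EuclideanSpace ℝ (Fin N)) d := ⟨v, hv⟩
  have hws : w ∈ s.interior := s.intrinsicInterior_convexHull_subset_interior hw
  have ⟨a, ha1, ha, hwa⟩ := hws
  have hsum : ∑ i, a i • (v i - w) = 0 := by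
    rw [← hwa, affineCombination_eq_linear_combination _ _ _ ha1]
    simp only [smul_sub, sum_sub_distrib, ← sum_smul, ha1, one_smul]
    exact sub_self _
  have hvert : 0 < ∑ i, a i ^ 2 * ‖v i - w‖ ^ 2 := by
    refine sum_pos (fun i _ => mul_pos (pow_pos (ha i).1 2) (pow_pos ?_ 2)) univ_nonempty
    exact norm_pos_iff.2 <| sub_ne_zero.2 fun h =>
      s.point_notMem_interior i (h ▸ hws : v i ∈ s.interior)
  have hweights : 0 < (∑ i, a i) ^ 2 - ∑ i, a i ^ 2 := by
    rw [ha1, one_pow, sub_pos, ← ha1]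
    exact sum_sq_lt_sum_of_mem_Ioo ha
  have hnorm := norm_sum_smul_sq_of_inner_eq a (fun i => v i - w) hc
  rw [hsum, norm_zero, zero_pow two_ne_zero] at hnorm
  exact neg_of_mul_neg_left (by linarith) hweights.le
end

section
/- Let $v_0,\ldots,v_d\in\mathbb{R}^N$ be affinely independent ($d\ge 2$), and suppose $w$ lies on the relative boundary of the simplex $[v_0,\ldots,v_d]$ and satisfies $\langle v_i-w,v_j-w\rangle = c$ for all $i\ne j$. Then $c = 0$ and $w$ equals one of the vertices $v_0,\ldots,v_d$. -/
open scoped RealInnerProductSpace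

open Finset Set

/-- If `w` lies on the relative boundary of the simplex `[v₀,…,v_d]` and
`⟪v i - w, v j - w⟫ = c` for all `i ≠ j`, then `c = 0` and `w` is a vertex. -/
theorem orthocenter_relbd (N d : ℕ) (hd : 2 ≤ d)
    (v : Fin (d + 1) → EuclideanSpace ℝ (Fin N))
    (hv : AffineIndependent ℝ v)
    (w : EuclideanSpace ℝ (Fin N)) (c : ℝ)
    (hc : ∀ i j : Fin (d + 1), i ≠ j → ⟪v i - w, v j - w⟫ = c)
    (hwS : w ∈ convexHull ℝ (Set.range v))
    (hw : w ∉ intrinsicInterior ℝ (convexHull ℝ (Set.range v))) :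
    c = 0 ∧ ∃ i, w = v i := by
  classical
  -- Obtain nonnegative barycentric coordinates of `w`.
  obtain ⟨a, ha0, hsum, waff⟩ :
      ∃ a : Fin (d + 1) → ℝ, (∀ i, 0 ≤ a i) ∧ ∑ i, a i = 1 ∧
        Finset.univ.affineCombination ℝ v a = w := by
    rw [convexHull_range_eq_exists_affineCombination] at hwS
    obtain ⟨s, a, h0, h1, hx⟩ := hwS
    refine ⟨(s : Set (Fin (d + 1))).indicator a, fun i => ?_, ?_, ?_⟩
    · by_cases hi : i ∈ s
      · rw [Set.indicator_of_mem (Finset.mem_coe.2 hi)]; exact h0 i hi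
      · rw [Set.indicator_of_notMem (fun h => hi (Finset.mem_coe.1 h))]
    · rw [Finset.sum_indicator_subset a s.subset_univ]; exact h1
    · rw [← Finset.affineCombination_indicator_subset a v s.subset_univ]; exact hx
  have hwS' : w ∈ convexHull ℝ (Set.range v) := hwS
  -- `w` as a linear combination
  have hlin : w = ∑ i, a i • v i := by
    rw [← waff, Finset.univ.affineCombination_eq_linear_combination v a hsum]
  have hzero : ∑ i, a i • (v i - w) = (0 : EuclideanSpace ℝ (Fin N)) := by
    have : ∑ i, a i • (v i - w) = (∑ i, a i • v i) - (∑ i, a i) • w := by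
      rw [Finset.sum_smul]
      simp [smul_sub, Finset.sum_sub_distrib]
    rw [this, hsum, one_smul, ← hlin, sub_self]
  have hip : ∀ k, ∑ i, a i * ⟪v i - w, v k - w⟫ = 0 := by
    intro k
    have h : ∑ i, ⟪a i • (v i - w), v k - w⟫ = (0 : ℝ) := by
      rw [← sum_inner, hzero, inner_zero_left]
    simp only [real_inner_smul_left] at h
    exact h
  -- Some coordinate vanishes, since `w` is not in the intrinsic interior.
  obtain ⟨k, hk⟩ : ∃ k, a k = 0 := by
    by_contra hcon
    push_neg at hcon
    have hpos : ∀ i, 0 < a i := fun i => lt_of_le_of_ne (ha0 i) (Ne.symm (hcon i))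
    -- extend `v` to an affine basis of the whole space
    obtain ⟨t, hst, hti, htt⟩ :=
      exists_subset_affineIndependent_affineSpan_eq_top hv.range
    let b : AffineBasis t ℝ (EuclideanSpace ℝ (Fin N)) :=
      ⟨fun p => (p : EuclideanSpace ℝ (Fin N)), hti, by rwa [Subtype.range_coe]⟩
    have hb : ⇑b = fun p : t => (p : EuclideanSpace ℝ (Fin N)) := rfl
    let e : Fin (d + 1) ↪ t :=
      ⟨fun i => ⟨v i, hst (Set.mem_range_self i)⟩, fun i j h =>
        hv.injective (congrArg Subtype.val h)⟩
    have key : ∀ (x : EuclideanSpace ℝ (Fin N)) (ax : Fin (d + 1) → ℝ),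
        ∑ i, ax i = 1 → Finset.univ.affineCombination ℝ v ax = x →
        ∀ i, b.coord (e i) x = ax i := by
      intro x ax hsx hxc i
      have hAe : ∀ j, Function.extend (⇑e) ax 0 (e j) = ax j := fun j =>
        e.injective.extend_apply ax 0 j
      have hsA : (Finset.univ.map e).sum (Function.extend (⇑e) ax 0) = 1 := by
        rw [Finset.sum_map]; simp only [hAe]; exact hsx
      have hxA : (Finset.univ.map e).affineCombination ℝ b (Function.extend (⇑e) ax 0) = x := by
        rw [hb, Finset.affineCombination_map]
        have h1 : ((fun p : t => (p : EuclideanSpace ℝ (Fin N))) ∘ ⇑e) = v := rfl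
        have h2 : (Function.extend (⇑e) ax 0) ∘ ⇑e = ax := funext hAe
        rw [h1, h2, hxc]
      have := b.coord_apply_combination_of_mem
        (Finset.mem_map_of_mem e (Finset.mem_univ i)) hsA
      rw [hxA] at this
      rw [this, hAe]
    -- the open set of points with positive `v`-coordinates
    set U : Set (EuclideanSpace ℝ (Fin N)) := ⋂ i, b.coord (e i) ⁻¹' Set.Ioi 0 with hU
    have hUopen : IsOpen U :=
      isOpen_iInter_of_finite fun i =>
        isOpen_Ioi.preimage (continuous_barycentric_coord b (e i))
    apply hw
    rw [mem_intrinsicInterior]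
    refine ⟨⟨w, subset_affineSpan ℝ _ hwS'⟩, ?_, rfl⟩
    have hsub : ((↑) ⁻¹' U :
        Set (affineSpan ℝ (convexHull ℝ (Set.range v)))) ⊆
        (↑) ⁻¹' (convexHull ℝ (Set.range v)) := by
      intro x hx
      have hxspan : (x : EuclideanSpace ℝ (Fin N)) ∈ affineSpan ℝ (Set.range v) :=
        (affineSpan_le.mpr (convexHull_subset_affineSpan (Set.range v))) x.2
      obtain ⟨ax, hax1, haxc⟩ := eq_affineCombination_of_mem_affineSpan_of_fintype hxspan
      have hcoord : ∀ i, b.coord (e i) (x : EuclideanSpace ℝ (Fin N)) = ax i :=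
        key _ ax hax1 haxc.symm
      have hxU : ∀ i, (0:ℝ) < b.coord (e i) (x : EuclideanSpace ℝ (Fin N)) := by
        intro i
        have := Set.mem_preimage.1 hx
        rw [hU] at this
        simpa using Set.mem_iInter.1 this i
      have hnn : ∀ i ∈ Finset.univ, 0 ≤ ax i := fun i _ => le_of_lt (hcoord i ▸ hxU i)
      rw [Set.mem_preimage, haxc]
      exact affineCombination_mem_convexHull hnn hax1
    refine mem_interior_iff_mem_nhds.2 (Filter.mem_of_superset ?_ hsub)
    refine (hUopen.preimage continuous_subtype_val).mem_nhds ?_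
    rw [Set.mem_preimage, hU, Set.mem_iInter]
    intro i
    have := key w a hsum waff i
    simpa [this] using hpos i
  -- Now derive `c = 0`.
  have hc0 : c = 0 := by
    have h1 : ∑ i, a i * ⟪v i - w, v k - w⟫ = ∑ i, a i * c := by
      refine Finset.sum_congr rfl fun i _ => ?_
      rcases eq_or_ne i k with rfl | hik
      · rw [hk]; ring
      · rw [hc i k hik]
    have h2 : ∑ i, a i * c = c := by
      rw [← Finset.sum_mul, hsum, one_mul]
    have h3 := hip k
    rw [h1, h2] at h3
    exact h3
  refine ⟨hc0, ?_⟩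
  -- Some coordinate is nonzero; the corresponding vertex equals `w`.
  obtain ⟨j, hj⟩ : ∃ j, a j ≠ 0 := by
    by_contra hall
    push_neg at hall
    rw [Finset.sum_congr rfl fun i _ => hall i] at hsum
    simp at hsum
  have hsingle : ∑ i, a i * ⟪v i - w, v j - w⟫ = a j * ⟪v j - w, v j - w⟫ := by
    refine Finset.sum_eq_single j (fun i _ hij => ?_) (fun h => absurd (Finset.mem_univ j) h)
    rw [hc i j hij, hc0, mul_zero]
  have hj0 : a j * ⟪v j - w, v j - w⟫ = 0 := by rw [← hsingle]; exact hip j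
  have hinner : ⟪v j - w, v j - w⟫ = 0 := by
    rcases mul_eq_zero.1 hj0 with h | h
    · exact absurd h hj
    · exact h
  refine ⟨j, ?_⟩
  have := inner_self_eq_zero (𝕜 := ℝ).1 hinner
  have : v j - w = 0 := this
  have := sub_eq_zero.1 this
  exact this.symm
end

section
/- Let $v_0,\ldots,v_d\in\mathbb{R}^N$ be affinely independent ($d\ge 2$), let $w$ be in the affine hull but not in the simplex $[v_0,\ldots,v_d]$, and suppose $\langle v_i-w,v_j-w\rangle = c$ for all $i\ne j$. Then $c > 0$, and moreover there is exactly one index $i_0\in\{0,\ldots,d\}$ with $\|v_{i_0}-w\|^2 < c$, while $\|v_i-w\|^2 > c$ for all other indices $i$. -/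
open scoped RealInnerProductSpace

/-- If `w` lies in the affine hull but outside the simplex `[v₀,…,v_d]` and
`⟪v i - w, v j - w⟫ = c` for all `i ≠ j`, then `c > 0`; moreover
`‖v i₀ - w‖² < c` for exactly one index `i₀` and `‖v i - w‖² > c` for all other `i`. -/
theorem orthocenter_outside (N d : ℕ) (hd : 2 ≤ d)
    (v : Fin (d + 1) → EuclideanSpace ℝ (Fin N))
    (hv : AffineIndependent ℝ v)
    (w : EuclideanSpace ℝ (Fin N)) (c : ℝ)
    (hc : ∀ i j : Fin (d + 1), i ≠ j → ⟪v i - w, v j - w⟫ = c)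
    (hwa : w ∈ affineSpan ℝ (Set.range v))
    (hw : w ∉ convexHull ℝ (Set.range v)) :
    0 < c ∧ ∃ i₀ : Fin (d + 1), ‖v i₀ - w‖ ^ 2 < c ∧
      ∀ i, i ≠ i₀ → c < ‖v i - w‖ ^ 2 := by
  obtain ⟨lam, hsum, hwl⟩ := eq_affineCombination_of_mem_affineSpan_of_fintype hwa
  have hu0 : ∀ j, 0 < ‖v j - w‖ ^ 2 := by
    intro j
    have hmem : v j ∈ convexHull ℝ (Set.range v) := subset_convexHull ℝ _ ⟨j, rfl⟩
    have hne : v j - w ≠ 0 := by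
      rw [sub_ne_zero]
      rintro rfl; exact hw hmem
    exact pow_pos (norm_pos_iff.mpr hne) 2
  have hconv : ¬ ∀ i, 0 ≤ lam i := by
    intro hall
    apply hw
    rw [hwl]
    have := affineCombination_mem_convexHull (R := ℝ) (v := v) (w := lam) (fun i _ => hall i) hsum
    simpa using this
  have hzero : ∑ i, lam i • (v i - w) = 0 := by
    have h1 : (Finset.univ.affineCombination ℝ v lam : EuclideanSpace ℝ (Fin N))
        = ∑ i, lam i • v i := Finset.affineCombination_eq_linear_combination _ _ _ hsum
    simp only [smul_sub]
    rw [Finset.sum_sub_distrib, ← Finset.sum_smul, hsum, one_smul, ← h1, ← hwl, sub_self]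
  have key : ∀ j, lam j * ‖v j - w‖ ^ 2 + (1 - lam j) * c = 0 := by
    intro j
    have h1 : ⟪v j - w, ∑ i, lam i • (v i - w)⟫ = 0 := by rw [hzero, inner_zero_right]
    rw [inner_sum] at h1
    simp_rw [real_inner_smul_right] at h1
    rw [← Finset.add_sum_erase _ _ (Finset.mem_univ j)] at h1
    have h2 : ∑ i ∈ Finset.univ.erase j, lam i * ⟪v j - w, v i - w⟫
        = ∑ i ∈ Finset.univ.erase j, lam i * c := by
      refine Finset.sum_congr rfl fun i hi => ?_
      rw [hc j i (Finset.ne_of_mem_erase hi).symm]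
    rw [h2, ← Finset.sum_mul, Finset.sum_erase_eq_sub (Finset.mem_univ j), hsum,
      real_inner_self_eq_norm_sq] at h1
    linarith
  have hc0 : c ≠ 0 := by
    intro h0
    have hl : ∀ j, lam j = 0 := by
      intro j
      have hk := key j
      rw [h0] at hk
      have := hu0 j
      nlinarith
    rw [Finset.sum_congr rfl (fun i _ => hl i)] at hsum
    simp at hsum
  have hPc : ∀ j, ‖v j - w‖ ^ 2 ≠ c := by
    intro j hj
    have hk := key j
    rw [hj] at hk
    exact hc0 (by linear_combination hk)
  have hlam : ∀ j, lam j * (‖v j - w‖ ^ 2 - c) = -c :=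
    fun j => by linear_combination key j
  have hcpos : 0 < c := by
    rcases lt_or_gt_of_ne hc0 with hneg | hpos
    · exfalso
      apply hconv
      intro j
      have h1 := hlam j
      have h2 : 0 < ‖v j - w‖ ^ 2 - c := by linarith [hu0 j]
      nlinarith
    · exact hpos
  have hex : ∃ i₀, ‖v i₀ - w‖ ^ 2 < c := by
    by_contra hno
    push_neg at hno
    have hln : ∀ j, lam j < 0 := by
      intro j
      have h1 := hlam j
      have h2 : 0 < ‖v j - w‖ ^ 2 - c :=
        sub_pos.mpr (lt_of_le_of_ne (hno j) (hPc j).symm)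
      nlinarith
    have hle : (∑ i, lam i) ≤ 0 := Finset.sum_nonpos fun i _ => (hln i).le
    linarith
  obtain ⟨i₀, hi₀⟩ := hex
  refine ⟨hcpos, i₀, hi₀, fun i hi => ?_⟩
  rcases lt_trichotomy (‖v i - w‖ ^ 2) c with h | h | h
  · exfalso
    have hCS := real_inner_le_norm (v i - w) (v i₀ - w)
    rw [hc i i₀ hi] at hCS
    nlinarith [norm_nonneg (v i - w), norm_nonneg (v i₀ - w)]
  · exact absurd h (hPc i)
  · exact h
end

section
/- Let $v_0,\ldots,v_d\in\mathbb{R}^N$ be affinely independent with orthocenter $w$ in the affine hull satisfying $\langle v_i-w, v_j-w\rangle = c$ for all $i\ne j$ with $c\ne 0$. Then $\|v_i-w\|^2 \ne c$ for all $i$, and $w = \sum_{i=0}^d \frac{c}{c - \|v_i-w\|^2}\, v_i$ with $\sum_{i=0}^d \frac{c}{c-\|v_i-w\|^2} = 1$. -/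
open scoped RealInnerProductSpace

/-- If `w` lies in the affine hull of affinely independent `v₀,…,v_d` and
`⟪v i - w, v j - w⟫ = c ≠ 0` for all `i ≠ j`, then `‖v i - w‖² ≠ c` for all `i`,
and `w = ∑ᵢ (c/(c - ‖vᵢ-w‖²)) vᵢ` with coefficients summing to `1`. -/
theorem orthocenter_affine_combination (N d : ℕ) (hd : 2 ≤ d)
    (v : Fin (d + 1) → EuclideanSpace ℝ (Fin N))
    (hv : AffineIndependent ℝ v)
    (w : EuclideanSpace ℝ (Fin N)) (c : ℝ) (hc0 : c ≠ 0)
    (hc : ∀ i j : Fin (d + 1), i ≠ j → ⟪v i - w, v j - w⟫ = c)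
    (hwa : w ∈ affineSpan ℝ (Set.range v)) :
    (∀ i, ‖v i - w‖ ^ 2 ≠ c) ∧
      w = ∑ i, (c / (c - ‖v i - w‖ ^ 2)) • v i ∧
      ∑ i, c / (c - ‖v i - w‖ ^ 2) = 1 := by
  obtain ⟨a, ha1, haw⟩ := eq_affineCombination_of_mem_affineSpan_of_fintype hwa
  rw [Finset.univ.affineCombination_eq_linear_combination v a ha1] at haw
  have h0 : (∑ i, a i • (v i - w)) = 0 := by
    simp only [smul_sub, Finset.sum_sub_distrib, ← Finset.sum_smul, ha1, one_smul, ← haw,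
      sub_self]
  have key : ∀ j, a j * (‖v j - w‖ ^ 2 - c) = -c := by
    intro j
    have h1 : ⟪(∑ i, a i • (v i - w)), v j - w⟫ = 0 := by rw [h0, inner_zero_left]
    rw [sum_inner] at h1
    simp only [real_inner_smul_left] at h1
    rw [← Finset.sum_erase_add _ _ (Finset.mem_univ j), real_inner_self_eq_norm_sq] at h1
    have h2 : ∑ i ∈ Finset.univ.erase j, a i * ⟪v i - w, v j - w⟫
        = (1 - a j) * c := by
      rw [Finset.sum_congr rfl (fun i hi => by
        rw [hc i j (Finset.ne_of_mem_erase hi)]), ← Finset.sum_mul]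
      have : ∑ i ∈ Finset.univ.erase j, a i = 1 - a j := by
        have := Finset.sum_erase_add Finset.univ a (Finset.mem_univ j)
        rw [ha1] at this
        linarith
      rw [this]
    rw [h2] at h1
    linarith [h1]
  have hne : ∀ i, ‖v i - w‖ ^ 2 ≠ c := by
    intro i h
    have := key i
    rw [h, sub_self, mul_zero] at this
    exact hc0 (by linarith)
  have ha : ∀ i, a i = c / (c - ‖v i - w‖ ^ 2) := by
    intro i
    have hsc : c - ‖v i - w‖ ^ 2 ≠ 0 := sub_ne_zero.mpr (Ne.symm (hne i))
    field_simp
    linarith [key i]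
  refine ⟨hne, ?_, ?_⟩
  · conv_lhs => rw [haw]
    exact Finset.sum_congr rfl fun i _ => by rw [ha i]
  · rw [← ha1]
    exact Finset.sum_congr rfl fun i _ => (ha i).symm
end

section
/- Let $d\ge 2$, $\tau_0,\ldots,\tau_d>0$, and let $e_0,\ldots,e_d$ be the standard orthonormal basis of $\mathbb{R}^{d+1}$. The simplex $S=[e_0/\tau_0,\ldots,e_d/\tau_d]$ is orthocentric, and its orthocenter is $w = (\tau_0 e_0 + \cdots + \tau_d e_d)/(\tau_0^2+\cdots+\tau_d^2)$, which lies in the relative interior of $S$. Moreover $w$ is the orthogonal projection of the origin onto the affine hull of $S$. -/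
/-!
The vertices `vᵢ = eᵢ / τᵢ` are pairwise orthogonal and span the hyperplane `⟪τ, x⟫ = 1`:
every `x` equals `∑ (τᵢ xᵢ) • vᵢ`, so the `τᵢ xᵢ` are its barycentric coordinates. The point
`w = τ / ‖τ‖²` is the foot of the perpendicular from the origin to this hyperplane, hence
`⟪w, vⱼ⟫` does not depend on `j`, and together with orthogonality of the vertices this gives
`⟪vᵢ - w, vⱼ - vₖ⟫ = 0`. The barycentric coordinates `τᵢ² / ‖τ‖²` of `w` are positive, an
open condition, so `w` lies in the relative interior.
-/

open scoped RealInnerProductSpace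

open Set

theorem AffineMap.apply_eq_of_mem_affineSpan {k V P W Q : Type*} [Ring k] [AddCommGroup V]
    [Module k V] [AddTorsor V P] [AddCommGroup W] [Module k W] [AddTorsor W Q]
    {f : P →ᵃ[k] Q} {s : Set P} {c : Q} (hf : ∀ p ∈ s, f p = c) {x : P}
    (hx : x ∈ affineSpan k s) : f x = c := by
  have hfx : f x ∈ affineSpan k (f '' s) :=
    AffineSubspace.map_span f s ▸ AffineSubspace.mem_map_of_mem f hx
  have hsub : f '' s ⊆ {c} := by rintro _ ⟨p, hp, rfl⟩; exact hf p hp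
  simpa using affineSpan_mono k hsub hfx

theorem mem_intrinsicInterior_of_isOpen {𝕜 E : Type*} [Ring 𝕜] [AddCommGroup E] [Module 𝕜 E]
    [TopologicalSpace E] {s U : Set E} {x : E} (hU : IsOpen U) (hxU : x ∈ U)
    (hx : x ∈ affineSpan 𝕜 s) (hUs : U ∩ affineSpan 𝕜 s ⊆ s) : x ∈ intrinsicInterior 𝕜 s :=
  mem_intrinsicInterior.mpr ⟨⟨x, hx⟩,
    interior_maximal (t := ((↑) : affineSpan 𝕜 s → E) ⁻¹' U) (fun z hz => hUs ⟨hz, z.2⟩)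
      (hU.preimage continuous_subtype_val) hxU, rfl⟩

theorem inner_sub_sub_eq_zero_of_pairwise_orthogonal {ι E : Type*} [NormedAddCommGroup E]
    [InnerProductSpace ℝ E] {v : ι → E} (hv : Pairwise fun i j => ⟪v i, v j⟫ = 0) {w : E} {c : ℝ}
    (hw : ∀ i, ⟪w, v i⟫ = c) {i j k : ι} (hij : i ≠ j) (hik : i ≠ k) :
    ⟪v i - w, v j - v k⟫ = 0 := by
  rw [inner_sub_left, inner_sub_right, inner_sub_right, hv hij, hv hik, hw, hw]
  ring

namespace EuclideanSpace

variable {ι : Type*} [Fintype ι]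

theorem isOpen_setOf_forall_pos : IsOpen {x : EuclideanSpace ℝ ι | ∀ i, 0 < x i} := by
  simp only [ofPred_forall]
  exact isOpen_iInter_of_finite fun i => isOpen_lt continuous_const (by fun_prop)

theorem inner_toLp_eq_sum (τ : ι → ℝ) (x : EuclideanSpace ℝ ι) :
    ⟪WithLp.toLp 2 τ, x⟫ = ∑ i, τ i * x i := by
  simp [PiLp.inner_apply, mul_comm]

theorem sum_smul_single [DecidableEq ι] (τ : ι → ℝ) :
    ∑ i, τ i • EuclideanSpace.single i (1 : ℝ) = WithLp.toLp 2 τ := by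
  ext j
  simp [Pi.single_apply]

end EuclideanSpace

namespace ScaledStandardSimplex

variable {ι : Type*} [Fintype ι] {τ : ι → ℝ}

variable (τ) in
noncomputable def footOfOrigin : EuclideanSpace ℝ ι := (∑ i, τ i ^ 2)⁻¹ • WithLp.toLp 2 τ

theorem sum_sq_pos [Nonempty ι] (hτ : ∀ i, τ i ≠ 0) : 0 < ∑ i, τ i ^ 2 :=
  Finset.sum_pos (fun i _ => sq_pos_of_ne_zero (hτ i)) Finset.univ_nonempty

theorem inner_footOfOrigin (x : EuclideanSpace ℝ ι) :
    ⟪footOfOrigin τ, x⟫ = (∑ i, τ i ^ 2)⁻¹ * ⟪WithLp.toLp 2 τ, x⟫ :=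
  real_inner_smul_left _ _ _

theorem inner_toLp_footOfOrigin [Nonempty ι] (hτ : ∀ i, τ i ≠ 0) :
    ⟪WithLp.toLp 2 τ, footOfOrigin τ⟫ = 1 := by
  rw [footOfOrigin, real_inner_smul_right, EuclideanSpace.inner_toLp_eq_sum]
  simp only [← sq]
  exact inv_mul_cancel₀ (sum_sq_pos hτ).ne'

variable [DecidableEq ι]

variable (τ) in
noncomputable def vertex (i : ι) : EuclideanSpace ℝ ι := (τ i)⁻¹ • EuclideanSpace.single i 1

theorem inner_vertex_vertex {i j : ι} (hij : i ≠ j) : ⟪vertex τ i, vertex τ j⟫ = 0 := by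
  simp [vertex, real_inner_smul_left, real_inner_smul_right, EuclideanSpace.inner_single_left,
    hij.symm]

theorem inner_toLp_vertex {i : ι} (hi : τ i ≠ 0) : ⟪WithLp.toLp 2 τ, vertex τ i⟫ = 1 := by
  simp [vertex, real_inner_smul_right, EuclideanSpace.inner_single_right, hi]

theorem eq_sum_smul_vertex (hτ : ∀ i, τ i ≠ 0) (x : EuclideanSpace ℝ ι) :
    x = ∑ i, (τ i * x i) • vertex τ i := by
  simp_rw [vertex, smul_smul, mul_right_comm _ _ (τ _)⁻¹, mul_inv_cancel₀ (hτ _), one_mul]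
  ext j
  simp [Pi.single_apply]

theorem mem_affineSpan_iff (hτ : ∀ i, τ i ≠ 0) {x : EuclideanSpace ℝ ι} :
    x ∈ affineSpan ℝ (range (vertex τ)) ↔ ⟪WithLp.toLp 2 τ, x⟫ = 1 := by
  constructor
  · intro hx
    exact AffineMap.apply_eq_of_mem_affineSpan (f := (innerₛₗ ℝ (WithLp.toLp 2 τ)).toAffineMap)
      (by rintro _ ⟨i, rfl⟩; exact inner_toLp_vertex (hτ i)) hx
  · intro hx
    have hsum : ∑ i, τ i * x i = 1 := by rwa [← EuclideanSpace.inner_toLp_eq_sum]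
    have := affineCombination_mem_affineSpan hsum (vertex τ)
    rwa [Finset.affineCombination_eq_linear_combination _ _ _ hsum,
      ← eq_sum_smul_vertex hτ] at this

theorem inner_footOfOrigin_of_mem (hτ : ∀ i, τ i ≠ 0) {x : EuclideanSpace ℝ ι}
    (hx : x ∈ affineSpan ℝ (range (vertex τ))) :
    ⟪footOfOrigin τ, x⟫ = (∑ i, τ i ^ 2)⁻¹ := by
  rw [inner_footOfOrigin, (mem_affineSpan_iff hτ).mp hx, mul_one]

theorem mem_convexHull_of_nonneg (hτ : ∀ i, 0 < τ i) {x : EuclideanSpace ℝ ι}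
    (hx : x ∈ affineSpan ℝ (range (vertex τ))) (hx₀ : ∀ i, 0 ≤ x i) :
    x ∈ convexHull ℝ (range (vertex τ)) := by
  have hτ₀ i : τ i ≠ 0 := (hτ i).ne'
  rw [eq_sum_smul_vertex hτ₀ x]
  refine (convex_convexHull ℝ _).sum_mem (fun i _ => mul_nonneg (hτ i).le (hx₀ i)) ?_
    (fun i _ => subset_convexHull ℝ _ (mem_range_self i))
  rw [← EuclideanSpace.inner_toLp_eq_sum, ← mem_affineSpan_iff hτ₀]
  exact hx

variable [Nonempty ι]

theorem footOfOrigin_mem_affineSpan (hτ : ∀ i, τ i ≠ 0) :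
    footOfOrigin τ ∈ affineSpan ℝ (range (vertex τ)) :=
  (mem_affineSpan_iff hτ).mpr (inner_toLp_footOfOrigin hτ)

theorem footOfOrigin_mem_intrinsicInterior (hτ : ∀ i, 0 < τ i) :
    footOfOrigin τ ∈ intrinsicInterior ℝ (convexHull ℝ (range (vertex τ))) := by
  have hτ₀ i : τ i ≠ 0 := (hτ i).ne'
  refine mem_intrinsicInterior_of_isOpen EuclideanSpace.isOpen_setOf_forall_pos
    (fun i => mul_pos (inv_pos.mpr (sum_sq_pos hτ₀)) (hτ i)) ?_ ?_ <;> rw [affineSpan_convexHull]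
  · exact footOfOrigin_mem_affineSpan hτ₀
  · exact fun x ⟨hx₀, hx⟩ => mem_convexHull_of_nonneg hτ hx fun i => (hx₀ i).le

end ScaledStandardSimplex

open ScaledStandardSimplex in
theorem acute_canonical_orthocentric_general (d : ℕ)
    (τ : Fin (d + 1) → ℝ) (hτ : ∀ i, 0 < τ i) :
    let e : Fin (d + 1) → EuclideanSpace ℝ (Fin (d + 1)) :=
      fun i => EuclideanSpace.single i 1
    let v : Fin (d + 1) → EuclideanSpace ℝ (Fin (d + 1)) :=
      fun i => (τ i)⁻¹ • e i
    let w : EuclideanSpace ℝ (Fin (d + 1)) :=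
      (∑ i, (τ i) ^ 2)⁻¹ • ∑ i, τ i • e i
    (w ∈ affineSpan ℝ (Set.range v)) ∧
    (∀ i j k : Fin (d + 1), i ≠ j → j ≠ k → i ≠ k → ⟪v i - w, v j - v k⟫ = 0) ∧
    (w ∈ intrinsicInterior ℝ (convexHull ℝ (Set.range v))) ∧
    (∀ p ∈ affineSpan ℝ (Set.range v), ⟪p - w, w⟫ = 0) := by
  intro e v w
  have hv : v = vertex τ := rfl
  have hw : w = footOfOrigin τ := by
    simp only [w, e, EuclideanSpace.sum_smul_single, footOfOrigin]
  have hτ₀ i : τ i ≠ 0 := (hτ i).ne'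
  have hw_mem := footOfOrigin_mem_affineSpan hτ₀
  rw [hw, hv]
  refine ⟨hw_mem, fun i j k hij _ hik => ?_, footOfOrigin_mem_intrinsicInterior hτ, fun p hp => ?_⟩
  · exact inner_sub_sub_eq_zero_of_pairwise_orthogonal (fun _ _ => inner_vertex_vertex)
      (fun l => inner_footOfOrigin_of_mem hτ₀ (subset_affineSpan ℝ _ (mem_range_self l))) hij hik
  · rw [inner_sub_left, real_inner_comm, inner_footOfOrigin_of_mem hτ₀ hp,
      inner_footOfOrigin_of_mem hτ₀ hw_mem, sub_self]

/-- For `τ₀,…,τ_d > 0` the simplex `S = [e₀/τ₀,…,e_d/τ_d] ⊆ ℝ^{d+1}` is orthocentric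
with orthocenter `w = (∑ τᵢ eᵢ)/(∑ τᵢ²)`, which lies in the relative interior of `S`
and is the orthogonal projection of the origin onto the affine hull of `S`. -/
theorem acute_canonical_orthocentric (d : ℕ) (hd : 2 ≤ d)
    (τ : Fin (d + 1) → ℝ) (hτ : ∀ i, 0 < τ i) :
    let e : Fin (d + 1) → EuclideanSpace ℝ (Fin (d + 1)) :=
      fun i => EuclideanSpace.single i 1
    let v : Fin (d + 1) → EuclideanSpace ℝ (Fin (d + 1)) :=
      fun i => (τ i)⁻¹ • e i
    let w : EuclideanSpace ℝ (Fin (d + 1)) :=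
      (∑ i, (τ i) ^ 2)⁻¹ • ∑ i, τ i • e i
    (w ∈ affineSpan ℝ (Set.range v)) ∧
    (∀ i j k : Fin (d + 1), i ≠ j → j ≠ k → i ≠ k → ⟪v i - w, v j - v k⟫ = 0) ∧
    (w ∈ intrinsicInterior ℝ (convexHull ℝ (Set.range v))) ∧
    (∀ p ∈ affineSpan ℝ (Set.range v), ⟪p - w, w⟫ = 0) :=
  acute_canonical_orthocentric_general d τ hτ
end

section
/- Let $d\ge 2$ and $\tau_0,\tau_1,\ldots,\tau_d>0$, with $e_0,\ldots,e_d$ the standard basis of $\mathbb{R}^{d+1}$. The simplex $S = [w, e_1/\tau_1, \ldots, e_d/\tau_d]$ with $w = (\tau_0 e_0+\cdots+\tau_d e_d)/(\tau_0^2+\cdots+\tau_d^2)$ is orthocentric with orthocenter $e_0/\tau_0$, and moreover $\langle v_i - e_0/\tau_0, v_j - e_0/\tau_0\rangle = 1/\tau_0^2$ for all pairs of distinct vertices $v_i\ne v_j$ of $S$. In particular, the orthocenter $e_0/\tau_0$ does not lie in $S$. -/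
open scoped RealInnerProductSpace

/-- The simplex `S = [w, e₁/τ₁, …, e_d/τ_d]` with `w = (∑ τᵢ eᵢ)/(∑ τᵢ²)` is orthocentric
with orthocenter `p = e₀/τ₀`, the common inner product `⟪vᵢ - p, vⱼ - p⟫` equals `1/τ₀²`
for distinct vertices, and `p` does not lie in `S`. -/
theorem obtuse_canonical_orthocentric (d : ℕ) (hd : 2 ≤ d)
    (τ : Fin (d + 1) → ℝ) (hτ : ∀ i, 0 < τ i) :
    let e : Fin (d + 1) → EuclideanSpace ℝ (Fin (d + 1)) :=
      fun i => EuclideanSpace.single i 1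
    let w : EuclideanSpace ℝ (Fin (d + 1)) :=
      (∑ i, (τ i) ^ 2)⁻¹ • ∑ i, τ i • e i
    let v : Fin (d + 1) → EuclideanSpace ℝ (Fin (d + 1)) :=
      fun i => if i = 0 then w else (τ i)⁻¹ • e i
    let p : EuclideanSpace ℝ (Fin (d + 1)) := (τ 0)⁻¹ • e 0
    (p ∈ affineSpan ℝ (Set.range v)) ∧
    (∀ i j k : Fin (d + 1), i ≠ j → j ≠ k → i ≠ k → ⟪v i - p, v j - v k⟫ = 0) ∧
    (∀ i j : Fin (d + 1), i ≠ j → ⟪v i - p, v j - p⟫ = 1 / (τ 0) ^ 2) ∧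
    (p ∉ convexHull ℝ (Set.range v)) := by
  intro e w v p
  have hτ0 := hτ 0
  set T : ℝ := ∑ i, (τ i) ^ 2 with hT
  have hTpos : 0 < T := Finset.sum_pos (fun i _ => pow_pos (hτ i) 2) ⟨0, Finset.mem_univ 0⟩
  have hτ0sq : (τ 0)^2 ≠ 0 := by positivity
  have hee : ∀ i j : Fin (d+1), ⟪e i, e j⟫ = if i = j then (1:ℝ) else 0 := by
    intro i j
    simp [e, EuclideanSpace.inner_single_left, EuclideanSpace.single_apply, eq_comm]
  have hse : ∀ j : Fin (d+1), ⟪∑ i, τ i • e i, e j⟫ = τ j := by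
    intro j
    rw [sum_inner]
    have h1 : ∀ i, ⟪τ i • e i, e j⟫ = if i = j then τ i else 0 := by
      intro i
      rw [real_inner_smul_left, hee]
      split <;> simp
    simp_rw [h1]
    simp
  -- key lemma
  have key : ∀ i j : Fin (d+1), i ≠ j → ⟪v i - p, v j - p⟫ = 1 / (τ 0) ^ 2 := by
    have main : ∀ j : Fin (d+1), j ≠ 0 →
        ⟪v 0 - p, v j - p⟫ = 1 / (τ 0) ^ 2 := by
      intro j hj
      simp only [v, p, if_pos rfl, if_neg hj, w, ← hT]
      simp only [inner_sub_left, inner_sub_right, real_inner_smul_left,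
        real_inner_smul_right, hse, hee]
      simp only [Ne.symm hj, if_false, if_true, eq_self_iff_true]
      have hτj := (hτ j).ne'
      have hTne := hTpos.ne'
      field_simp
      try ring
      try tauto
    have main2 : ∀ i j : Fin (d+1), i ≠ 0 → j ≠ 0 → i ≠ j →
        ⟪v i - p, v j - p⟫ = 1 / (τ 0) ^ 2 := by
      intro i j hi hj hij
      simp only [v, p, if_neg hi, if_neg hj]
      simp only [inner_sub_left, inner_sub_right, real_inner_smul_left,
        real_inner_smul_right, hee]
      simp only [hij, hi, hj, Ne.symm hj, Ne.symm hi, Ne.symm hij,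
        if_false, if_true, eq_self_iff_true]
      field_simp
      ring
    intro i j hij
    rcases eq_or_ne i 0 with rfl | hi
    · exact main j (Ne.symm hij)
    · rcases eq_or_ne j 0 with rfl | hj
      · rw [real_inner_comm]; exact main i hi
      · exact main2 i j hi hj hij
  refine ⟨?_, ?_, key, ?_⟩
  · -- affine span membership
    classical
    set c : Fin (d+1) → ℝ := fun i => if i = 0 then T / (τ 0)^2 else -((τ i)^2 / (τ 0)^2)
      with hc
    have hTsplit : T = (τ 0)^2 + ∑ i : Fin d, (τ i.succ)^2 := by
      rw [hT, Fin.sum_univ_succ]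
    have hsum : ∑ i, c i = 1 := by
      rw [Fin.sum_univ_succ]
      simp only [c, if_pos rfl]
      rw [Finset.sum_congr rfl (fun i _ => if_neg (Fin.succ_ne_zero i))]
      have hns : ∑ i : Fin d, -((τ i.succ)^2 / (τ 0)^2)
          = -((∑ i : Fin d, (τ i.succ)^2) / (τ 0)^2) := by
        rw [Finset.sum_neg_distrib, Finset.sum_div]
      rw [hns]
      have hTne := hTpos.ne'
      field_simp
      linarith [hTsplit]
    have hcomb : ∑ i, c i • v i = p := by
      have step : ∀ i : Fin (d+1), c i • v i =
          ((τ 0)^2)⁻¹ • (if i = 0 then ∑ k, τ k • e k else -(τ i • e i)) := by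
        intro i
        rcases eq_or_ne i 0 with rfl | hi
        · simp only [c, v, if_pos rfl, w, ← hT, smul_smul]
          congr 1
          have hTne := hTpos.ne'
          field_simp
        · have hτi := (hτ i).ne'
          have hcoef : -((τ i)^2/(τ 0)^2) * (τ i)⁻¹ = -(((τ 0)^2)⁻¹ * τ i) := by
            field_simp
          simp only [c, v, if_neg hi, smul_smul, hcoef, neg_smul, smul_neg]
      simp_rw [step]
      rw [← Finset.smul_sum]
      have hss : ∑ i, (if i = 0 then ∑ k, τ k • e k else -(τ i • e i)) = τ 0 • e 0 := by
        rw [Fin.sum_univ_succ, if_pos rfl]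
        rw [Finset.sum_congr rfl (fun i _ => if_neg (Fin.succ_ne_zero i))]
        rw [Fin.sum_univ_succ (f := fun k => τ k • e k), Finset.sum_neg_distrib]
        abel
      rw [hss, smul_smul]
      simp only [p]
      congr 1
      field_simp
    have := affineCombination_mem_affineSpan (k := ℝ) (s := Finset.univ)
      (w := c) hsum v
    rwa [Finset.affineCombination_eq_linear_combination _ _ _ hsum, hcomb] at this
  · -- orthocenter property
    intro i j k hij hjk hik
    have hsplit : v j - v k = (v j - p) - (v k - p) := by abel
    rw [hsplit, inner_sub_right, key i j hij, key i k hik, sub_self]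
  · -- not in convex hull
    intro hp
    have hhalf : convexHull ℝ (Set.range v) ⊆
        {x : EuclideanSpace ℝ (Fin (d+1)) | x 0 ≤ τ 0 / T} := by
      apply convexHull_min
      · rintro x ⟨i, rfl⟩
        rcases eq_or_ne i 0 with rfl | hi
        · simp only [v, if_pos rfl, w, ← hT, Set.mem_setOf_eq]
          have hw0 : ((T⁻¹ • ∑ i, τ i • e i : EuclideanSpace ℝ (Fin (d+1)))) 0
              = T⁻¹ * τ 0 := by
            simp only [PiLp.smul_apply, smul_eq_mul]
            congr 1
            have := hse 0
            rw [real_inner_comm] at this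
            rw [← this, EuclideanSpace.inner_single_left]
            simp [e]
          rw [hw0]
          rw [inv_mul_eq_div, div_le_div_iff₀ hTpos hTpos]
        · simp only [v, if_neg hi, Set.mem_setOf_eq, PiLp.smul_apply, smul_eq_mul]
          have he0 : e i 0 = 0 := by
            simp [e, EuclideanSpace.single_apply, Ne.symm hi]
          rw [he0, mul_zero]
          positivity
      · exact convex_halfSpace_le ⟨fun x y => rfl, fun a x => rfl⟩ _
    have hple := hhalf hp
    simp only [Set.mem_setOf_eq, p, PiLp.smul_apply, smul_eq_mul] at hple
    have he0 : e 0 0 = 1 := by simp [e]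
    rw [he0, mul_one] at hple
    have hT0 : (τ 0)^2 < T := by
      have h01 : (0 : Fin (d+1)) ≠ 1 := by
        have h1 : (1:ℕ) < d + 1 := by omega
        simp [Fin.ext_iff, Fin.val_one, Nat.mod_eq_of_lt h1]
      have hle : (τ 0)^2 + (τ 1)^2 ≤ T := by
        rw [hT]
        have hs := Finset.sum_le_sum_of_subset_of_nonneg
          (Finset.subset_univ ({0, 1} : Finset (Fin (d+1))))
          (fun i _ _ => (sq_nonneg (τ i)))
        rwa [Finset.sum_pair h01] at hs
      nlinarith [sq_nonneg (τ 1), hτ 1]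
    have hlt : τ 0 / T < (τ 0)⁻¹ := by
      rw [div_lt_iff₀ hTpos, inv_mul_eq_div, lt_div_iff₀ hτ0]
      nlinarith
    linarith
end

section
/- Let $v_0,\ldots,v_d\in\mathbb{R}^N$ ($d\ge 2$) be affinely independent, and suppose $[v_0,\ldots,v_d]$ is orthocentric with orthocenter $w$ in the relative interior and common off-diagonal inner product $c = \langle v_i-w, v_j-w\rangle < 0$ for $i\ne j$. Setting $\tau_i = (\|v_i-w\|^2 - c)^{-1/2}$ for $i = 0,\ldots,d$, the simplex $[v_0,\ldots,v_d]$ is isometric to $[e_0/\tau_0,\ldots,e_d/\tau_d]\subseteq\mathbb{R}^{d+1}$, i.e. $\|v_i - v_j\|^2 = 1/\tau_i^2 + 1/\tau_j^2$ for all $i\ne j$. -/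
open scoped RealInnerProductSpace

/-- An acute orthocentric simplex with orthocenter `w` in its relative interior and
obtuseness `c = ⟪vᵢ-w, vⱼ-w⟫ < 0`, with `τᵢ = (‖vᵢ-w‖² - c)^{-1/2}`, is isometric to
`[e₀/τ₀, …, e_d/τ_d]`, i.e. `‖vᵢ - vⱼ‖² = 1/τᵢ² + 1/τⱼ²` for all `i ≠ j`. -/
theorem acute_canonical_form (N d : ℕ) (hd : 2 ≤ d)
    (v : Fin (d + 1) → EuclideanSpace ℝ (Fin N))
    (hv : AffineIndependent ℝ v)
    (w : EuclideanSpace ℝ (Fin N)) (c : ℝ) (hcneg : c < 0)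
    (hc : ∀ i j : Fin (d + 1), i ≠ j → ⟪v i - w, v j - w⟫ = c)
    (hw : w ∈ intrinsicInterior ℝ (convexHull ℝ (Set.range v)))
    (τ : Fin (d + 1) → ℝ)
    (hτ : ∀ i, τ i = (Real.sqrt (‖v i - w‖ ^ 2 - c))⁻¹) :
    ∀ i j : Fin (d + 1), i ≠ j →
      ‖v i - v j‖ ^ 2 = 1 / (τ i) ^ 2 + 1 / (τ j) ^ 2 := by
  intro i j hij
  have hpos : ∀ k : Fin (d + 1), (0:ℝ) ≤ ‖v k - w‖ ^ 2 - c := fun k => by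
    have := sq_nonneg ‖v k - w‖
    linarith
  have hτsq : ∀ k : Fin (d + 1), 1 / (τ k) ^ 2 = ‖v k - w‖ ^ 2 - c := fun k => by
    rw [hτ k, one_div, inv_pow, inv_inv, Real.sq_sqrt (hpos k)]
  rw [hτsq i, hτsq j]
  have key : v i - v j = (v i - w) - (v j - w) := by abel
  have := hc i j hij
  rw [key, norm_sub_sq_real, this]
  ring
end

section
/- Let $d\ge 2$, $\tau_1,\ldots,\tau_d > 0$, $k\in\{0,\ldots,d-1\}$, and consider the simplex $S = [0, e_1/\tau_1, \ldots, e_d/\tau_d]\subseteq\mathbb{R}^d$. For the face $F = [0, e_1/\tau_1, \ldots, e_k/\tau_k]$, the normal cone $N(F,S)$ equals the cone $\{\sum_{i=k+1}^d c_i(-e_i) : c_i \ge 0\}$ spanned by $-e_{k+1},\ldots,-e_d$. -/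
open scoped RealInnerProductSpace
open Finset

private lemma relint_inner_eq_zero {E : Type*} [NormedAddCommGroup E] [InnerProductSpace ℝ E]
    {F : Set E} {x₀ : E} (hx₀ : x₀ ∈ intrinsicInterior ℝ F) {v : E}
    (hv : ∀ z ∈ F, ⟪v, z - x₀⟫ ≤ 0) : ∀ z ∈ F, ⟪v, z - x₀⟫ = 0 := by
  obtain ⟨y, hy, hyx⟩ := hx₀
  intro z hz
  refine le_antisymm (hv z hz) ?_
  have hzA : z ∈ affineSpan ℝ F := subset_affineSpan ℝ F hz
  have hxA : x₀ ∈ affineSpan ℝ F := hyx ▸ y.2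
  set g : ℝ → affineSpan ℝ F := fun t =>
    ⟨AffineMap.lineMap z x₀ t, AffineMap.lineMap_mem t hzA hxA⟩ with hg
  have hgc : Continuous g :=
    Continuous.subtype_mk (AffineMap.lineMap_continuous) _
  have h1 : g 1 = y := Subtype.ext (by simp [g, hyx])
  have hopen : IsOpen (g ⁻¹' interior (((↑) : affineSpan ℝ F → E) ⁻¹' F)) :=
    isOpen_interior.preimage hgc
  have h1mem : (1:ℝ) ∈ g ⁻¹' interior (((↑) : affineSpan ℝ F → E) ⁻¹' F) := by
    rw [Set.mem_preimage, h1]; exact hy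
  obtain ⟨ε, hε, hball⟩ := Metric.isOpen_iff.1 hopen 1 h1mem
  have ht : (1 + ε/2 : ℝ) ∈ Metric.ball (1:ℝ) ε := by
    simp only [Metric.mem_ball, Real.dist_eq]
    rw [abs_of_pos (by linarith)]; linarith
  have htF : AffineMap.lineMap z x₀ (1 + ε/2 : ℝ) ∈ F := by
    have h2 := hball ht
    rw [Set.mem_preimage] at h2
    have h3 : g (1 + ε/2 : ℝ) ∈ Subtype.val ⁻¹' F := interior_subset h2
    exact h3
  have hle := hv _ htF
  have hl : (AffineMap.lineMap z x₀ (1 + ε/2 : ℝ) : E) - x₀ = (-(ε/2)) • (z - x₀) := by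
    simp only [AffineMap.lineMap_apply, vsub_eq_sub, vadd_eq_add]
    module
  rw [hl, real_inner_smul_right] at hle
  nlinarith

/-- For the rectangular simplex `S = [0, e₁/τ₁, …, e_d/τ_d]` and its face
`F = [0, e₁/τ₁, …, e_k/τ_k]`, the normal cone `N(F,S)` (defined using any point `x₀` of
the relative interior of `F`) equals the cone spanned by `-e_{k+1}, …, -e_d`. -/
theorem normal_cone_rectangular_face (d : ℕ) (hd : 2 ≤ d)
    (τ : Fin d → ℝ) (hτ : ∀ i, 0 < τ i) (k : ℕ) (hk : k ≤ d - 1) :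
    let e : Fin d → EuclideanSpace ℝ (Fin d) := fun i => EuclideanSpace.single i 1
    let S : Set (EuclideanSpace ℝ (Fin d)) :=
      convexHull ℝ (insert 0 (Set.range fun i => (τ i)⁻¹ • e i))
    let F : Set (EuclideanSpace ℝ (Fin d)) :=
      convexHull ℝ (insert 0 {x | ∃ i : Fin d, (i : ℕ) < k ∧ x = (τ i)⁻¹ • e i})
    ∀ x₀ ∈ intrinsicInterior ℝ F,
      {v : EuclideanSpace ℝ (Fin d) | ∀ z ∈ S, ⟪v, z - x₀⟫ ≤ 0}
        = {x | ∃ c : Fin d → ℝ, (∀ i, 0 ≤ c i) ∧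
            x = ∑ i ∈ Finset.univ.filter (fun i : Fin d => k ≤ (i : ℕ)),
              c i • (-e i)} := by
  intro e S F x₀ hx₀
  have hx₀F : x₀ ∈ F := intrinsicInterior_subset hx₀
  have hFS : F ⊆ S := convexHull_mono (Set.insert_subset_insert (by
    rintro x ⟨i, hi, rfl⟩; exact ⟨i, rfl⟩))
  have hproj : ∀ i : Fin d, IsLinearMap ℝ (fun x : EuclideanSpace ℝ (Fin d) => x i) :=
    fun i => ⟨fun a b => rfl, fun c a => rfl⟩
  have hsum : ∀ (s : Finset (Fin d)) (f : Fin d → EuclideanSpace ℝ (Fin d)) (j : Fin d),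
      (∑ i ∈ s, f i) j = ∑ i ∈ s, f i j := by
    intro s f j
    exact map_sum (EuclideanSpace.proj j (𝕜 := ℝ)) f s
  have hx0coord : ∀ i : Fin d, k ≤ (i:ℕ) → x₀ i = 0 := by
    intro i hi
    have hsub : F ⊆ {x : EuclideanSpace ℝ (Fin d) | x i = 0} := by
      refine convexHull_min ?_ (convex_hyperplane (hproj i) 0)
      rw [Set.insert_subset_iff]
      refine ⟨rfl, ?_⟩
      rintro x ⟨j, hj, rfl⟩
      have hij : i ≠ j := by
        intro h
        rw [h] at hi
        omega
      show ((τ j)⁻¹ • e j) i = 0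
      simp [e, EuclideanSpace.single_apply, PiLp.smul_apply, hij]
    exact hsub hx₀F
  have hznn : ∀ z ∈ S, ∀ i : Fin d, 0 ≤ z i := by
    intro z hz i
    have hsub : S ⊆ {x : EuclideanSpace ℝ (Fin d) | 0 ≤ x i} := by
      refine convexHull_min ?_ (convex_halfSpace_ge (hproj i) 0)
      rw [Set.insert_subset_iff]
      refine ⟨by exact le_refl (0:ℝ), ?_⟩
      rintro x ⟨j, rfl⟩
      show (0:ℝ) ≤ ((τ j)⁻¹ • e j) i
      simp only [PiLp.smul_apply, e, EuclideanSpace.single_apply, smul_eq_mul]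
      have := (hτ j).le
      by_cases h : i = j <;> simp [h] <;> positivity
    exact hsub hz
  ext v
  simp only [Set.mem_setOf_eq]
  constructor
  · intro hv
    have key := relint_inner_eq_zero hx₀ (fun w hw => hv w (hFS hw))
    have h0F : (0:EuclideanSpace ℝ (Fin d)) ∈ F := subset_convexHull ℝ _ (Set.mem_insert _ _)
    have hx0 : ⟪v, x₀⟫ = 0 := by
      have h := key 0 h0F
      rw [zero_sub, inner_neg_right] at h
      linarith
    have hie : ∀ i : Fin d, ⟪v, e i⟫ = v i := by
      intro i
      simp [e, EuclideanSpace.inner_single_right]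
    have hvk : ∀ i : Fin d, (i:ℕ) < k → v i = 0 := by
      intro i hi
      have hiF : (τ i)⁻¹ • e i ∈ F :=
        subset_convexHull ℝ _ (Set.mem_insert_of_mem _ ⟨i, hi, rfl⟩)
      have h := key _ hiF
      rw [inner_sub_right, real_inner_smul_right, hx0, sub_zero, hie] at h
      rcases mul_eq_zero.1 h with h' | h'
      · exact absurd h' (inv_ne_zero (hτ i).ne')
      · exact h'
    have hvnonpos : ∀ i : Fin d, v i ≤ 0 := by
      intro i
      have hiS : (τ i)⁻¹ • e i ∈ S :=
        subset_convexHull ℝ _ (Set.mem_insert_of_mem _ ⟨i, rfl⟩)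
      have h := hv _ hiS
      rw [inner_sub_right, real_inner_smul_right, hx0, sub_zero, hie] at h
      have hτi : (0:ℝ) < (τ i)⁻¹ := inv_pos.2 (hτ i)
      nlinarith
    refine ⟨fun i => -(v i), fun i => neg_nonneg.2 (hvnonpos i), ?_⟩
    have hterm : ∀ i : Fin d, (-(v i)) • (-(e i)) = v i • e i := fun i => by
      rw [neg_smul, smul_neg, neg_neg]
    refine PiLp.ext fun j => ?_
    rw [Finset.sum_congr rfl (fun i _ => hterm i), hsum]
    have : ∀ i : Fin d, (v i • e i) j = if j = i then v i else 0 := by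
      intro i
      simp only [PiLp.smul_apply, e, EuclideanSpace.single_apply, smul_eq_mul]
      by_cases h : j = i <;> simp [h]
    rw [Finset.sum_congr rfl (fun i _ => this i), Finset.sum_ite_eq]
    by_cases hjk : k ≤ (j:ℕ)
    · simp [hjk]
    · simp [hjk, hvk j (by omega)]
  · rintro ⟨c, hc, rfl⟩ z hz
    rw [sum_inner]
    refine Finset.sum_nonpos fun i hi => ?_
    rw [Finset.mem_filter] at hi
    rw [real_inner_smul_left, inner_neg_left]
    have he : ⟪e i, z - x₀⟫ = z i - x₀ i := by
      simp [e, EuclideanSpace.inner_single_left, PiLp.sub_apply]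
    rw [he, hx0coord i hi.2, sub_zero]
    exact mul_nonpos_of_nonneg_of_nonpos (hc i) (neg_nonpos.2 (hznn z hz i))
end

section
/- Let $d\ge 2$, $\tau_1,\ldots,\tau_d>0$, and $k\in\{1,\ldots,d\}$. The $k$-dimensional volume of the simplex $[e_{i_0}/\tau_{i_0},\ldots,e_{i_k}/\tau_{i_k}]$, for distinct indices $i_0<\cdots<i_k$ and standard basis vectors $e_i$ of $\mathbb{R}^d$, equals $\frac{\sqrt{\tau_{i_0}^2+\cdots+\tau_{i_k}^2}}{k!\,\tau_{i_0}\cdots\tau_{i_k}}$. -/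
open scoped RealInnerProductSpace
open Finset

/-!
With `sᵢ = 1/τᵢ`, the vertices are `sᵢ • eᵢ` for orthonormal `eᵢ`, so the Gram matrix of the
edge vectors from the vertex `s₀ • e₀` is `diag(s₁², …, s_k²) + s₀² 𝟙𝟙ᵀ`. By the matrix
determinant lemma its determinant is `(∏ sᵢ²)(∑ sᵢ⁻²) = (∑ τᵢ²) / (∏ τᵢ)²`.
-/

theorem Matrix.det_diagonal_add_const {n K : Type*} [Fintype n] [DecidableEq n] [Field K]
    (f : n → K) (hf : ∀ a, f a ≠ 0) (c : K) :
    (Matrix.diagonal f + Matrix.of fun _ _ => c).det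
      = (∏ a, f a) * (1 + c * ∑ a, (f a)⁻¹) := by
  have hfactor : Matrix.diagonal f + Matrix.of (fun _ _ => c) = Matrix.diagonal f * (1 +
      Matrix.replicateCol Unit (fun a => (f a)⁻¹) * Matrix.replicateRow Unit (fun _ => c)) := by
    ext a b
    rw [Matrix.diagonal_mul]
    simp [← Matrix.vecMulVec_eq, Matrix.vecMulVec_apply, Matrix.one_apply, Matrix.diagonal_apply,
      mul_add, hf]
  rw [hfactor, Matrix.det_mul, Matrix.det_diagonal,
    Matrix.det_one_add_replicateCol_mul_replicateRow, dotProduct, mul_sum]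

section ScaledOrthonormal

variable {E : Type*} [NormedAddCommGroup E] [InnerProductSpace ℝ E] {k : ℕ}
  {e : Fin (k + 1) → E} (he : Orthonormal ℝ e) (s : Fin (k + 1) → ℝ)
include he

theorem Orthonormal.gram_smul_sub_smul_zero :
    (Matrix.of fun a b : Fin k =>
        ⟪s a.succ • e a.succ - s 0 • e 0, s b.succ • e b.succ - s 0 • e 0⟫)
      = Matrix.diagonal (fun a => s a.succ ^ 2) + Matrix.of fun _ _ => s 0 ^ 2 := by
  ext a b
  simp only [inner_sub_left, inner_sub_right, real_inner_smul_left, real_inner_smul_right,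
    orthonormal_iff_ite.mp he, Fin.succ_inj, Fin.succ_ne_zero, (Fin.succ_ne_zero _).symm,
    ↓reduceIte, Matrix.add_apply, Matrix.diagonal_apply, Matrix.of_apply]
  split_ifs with hab
  · subst hab
    ring
  · ring

theorem Orthonormal.det_gram_smul_sub_smul_zero (hs : ∀ a, s a ≠ 0) :
    (Matrix.of fun a b : Fin k =>
        ⟪s a.succ • e a.succ - s 0 • e 0, s b.succ • e b.succ - s 0 • e 0⟫).det
      = (∏ a, s a ^ 2) * ∑ a, (s a ^ 2)⁻¹ := by
  rw [he.gram_smul_sub_smul_zero, Matrix.det_diagonal_add_const _ (fun a => pow_ne_zero 2 (hs _)),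
    Fin.prod_univ_succ, Fin.sum_univ_succ]
  have hs₀ : s 0 ≠ 0 := hs 0
  field_simp

end ScaledOrthonormal

theorem volume_face_rectangular_general (d : ℕ)
    (τ : Fin d → ℝ) (hτ : ∀ i, 0 < τ i)
    (k : ℕ)
    (ι : Fin (k + 1) → Fin d) (hι : StrictMono ι) :
    let e : Fin d → EuclideanSpace ℝ (Fin d) := fun i => EuclideanSpace.single i 1
    let v : Fin (k + 1) → EuclideanSpace ℝ (Fin d) := fun a => (τ (ι a))⁻¹ • e (ι a)
    (1 / (k.factorial : ℝ)) *
        Real.sqrt (Matrix.det (fun a b : Fin k => ⟪v a.succ - v 0, v b.succ - v 0⟫))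
      = Real.sqrt (∑ a, (τ (ι a)) ^ 2) / ((k.factorial : ℝ) * ∏ a, τ (ι a)) := by
  intro e v
  have he : Orthonormal ℝ (e ∘ ι) := EuclideanSpace.orthonormal_single.comp ι hι.injective
  have hdet := he.det_gram_smul_sub_smul_zero (fun a => (τ (ι a))⁻¹)
    (fun a => inv_ne_zero (hτ _).ne')
  simp only [Function.comp_apply, inv_pow, inv_inv, prod_inv_distrib, prod_pow] at hdet
  have hprod : 0 < ∏ a, τ (ι a) := prod_pos fun a _ => hτ _
  rw [show Matrix.det (fun a b : Fin k => ⟪v a.succ - v 0, v b.succ - v 0⟫) = _ from hdet,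
    inv_mul_eq_div, Real.sqrt_div' _ (sq_nonneg _), Real.sqrt_sq hprod.le]
  field_simp

/-- The `k`-dimensional volume (via the Gram determinant formula
`(1/k!)√det(⟪vᵢ-v₀, vⱼ-v₀⟫)`) of the simplex `[e_{i₀}/τ_{i₀}, …, e_{i_k}/τ_{i_k}]`
equals `√(τ_{i₀}² + ⋯ + τ_{i_k}²)/(k! τ_{i₀} ⋯ τ_{i_k})`. -/
theorem volume_face_rectangular (d : ℕ) (hd : 2 ≤ d)
    (τ : Fin d → ℝ) (hτ : ∀ i, 0 < τ i)
    (k : ℕ) (hk1 : 1 ≤ k) (hk : k ≤ d)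
    (ι : Fin (k + 1) → Fin d) (hι : StrictMono ι) :
    let e : Fin d → EuclideanSpace ℝ (Fin d) := fun i => EuclideanSpace.single i 1
    let v : Fin (k + 1) → EuclideanSpace ℝ (Fin d) := fun a => (τ (ι a))⁻¹ • e (ι a)
    (1 / (k.factorial : ℝ)) *
        Real.sqrt (Matrix.det (fun a b : Fin k => ⟪v a.succ - v 0, v b.succ - v 0⟫))
      = Real.sqrt (∑ a, (τ (ι a)) ^ 2) / ((k.factorial : ℝ) * ∏ a, τ (ι a)) :=
  volume_face_rectangular_general d τ hτ k ι hι
end
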